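/- For every MCD instance on the line network L(n) with origin r₀ and request sequence R = (r₁,…,r_N), Algorithm Triangle outputs a feasible solution F^T with |F^T| ≤ 3·|OPT|, and moreover its radii satisfy Σ_{i=1}^N ρ^T_i ≤ |OPT|. -/

import Mathlib

open Finset

/-! ## The time-line grid of a line network -/

/-- Grid edges of the time-line graph of the line network:
`h v t` is the undirected horizontal edge `{(v,t),(v+1,t)}`,
`a v t` is the arc `((v,t),(v,t+1))` directed forward in time. -/
inductive GEdge : Type
  | h (v t : ℕ) : GEdge
  | a (v t : ℕ) : GEdge
deriving DecidableEq

/-- Distance between two nodes of the line network. -/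
def natdist (a b : ℕ) : ℕ := max a b - min a b

/-- The (replica) endpoints of a grid edge. -/
def eVerts : GEdge → Finset (ℕ × ℕ)
  | .h v t => {(v, t), (v + 1, t)}
  | .a v t => {(v, t), (v, t + 1)}

/-- The replicas that are endpoints of edges of `F`. -/
def verts (F : Finset GEdge) : Finset (ℕ × ℕ) := F.biUnion eVerts

/-- The edge lies inside the grid of the line network `L(n)` (nodes `1,…,n`). -/
def eInGrid (n : ℕ) : GEdge → Prop
  | .h v _ => 1 ≤ v ∧ v + 1 ≤ n
  | .a v _ => 1 ≤ v ∧ v ≤ n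

/-- The distance `d((u,s),(v,t)) = (t-s) + |v-u|` if `s ≤ t`, and `∞` otherwise. -/
def gdist (p q : ℕ × ℕ) : WithTop ℕ :=
  if p.2 ≤ q.2 then ((q.2 - p.2 + natdist p.1 q.1 : ℕ) : WithTop ℕ) else ⊤

/-- One step of a path in a solution: horizontal edges may be traversed in both
directions, arcs only forward in time. -/
inductive GStep (F : Finset GEdge) : ℕ × ℕ → ℕ × ℕ → Prop
  | right {v t : ℕ} : GEdge.h v t ∈ F → GStep F (v, t) (v + 1, t)
  | left {v t : ℕ} : GEdge.h v t ∈ F → GStep F (v + 1, t) (v, t)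
  | up {v t : ℕ} : GEdge.a v t ∈ F → GStep F (v, t) (v, t + 1)

/-- `q` is reachable from `p` in the edge set `F`. -/
def Reaches (F : Finset GEdge) (p q : ℕ × ℕ) : Prop := Relation.ReflTransGen (GStep F) p q

/-- A feasible MCD solution: a set of grid edges spanning all requests from the
origin replica `(r0, 0)`. -/
def Feasible (n r0 : ℕ) (R : List (ℕ × ℕ)) (F : Finset GEdge) : Prop :=
  (∀ e ∈ F, eInGrid n e) ∧ ∀ r ∈ R, Reaches F (r0, 0) r

/-- `|OPT|`, the cost of a minimum-cost feasible solution. -/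
noncomputable def optCost (n r0 : ℕ) (R : List (ℕ × ℕ)) : ℕ :=
  sInf {c : ℕ | ∃ F : Finset GEdge, Feasible n r0 R F ∧ F.card = c}

/-- A valid MCD instance on `L(n)`: the origin and all requested nodes are in
`{1,…,n}` and the request times are nondecreasing. -/
def ValidInstance (n r0 : ℕ) (R : List (ℕ × ℕ)) : Prop :=
  1 ≤ r0 ∧ r0 ≤ n ∧ (∀ r ∈ R, 1 ≤ r.1 ∧ r.1 ≤ n) ∧ List.Chain' (· ≤ ·) (R.map Prod.snd)

/-- The time `t_N` of the last request. -/
def lastT (R : List (ℕ × ℕ)) : ℕ := (R.map Prod.snd).foldr max 0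

/-! ## The offline algorithm Triangle of Charikar, Halperin and Motwani -/

/-- The `i`-th request (junk value `(0,0)` out of range). -/
def req (R : List (ℕ × ℕ)) (i : ℕ) : ℕ × ℕ := R.getD i (0, 0)

/-- The radius `ρ^T_i = d(q_i, r_i)` of the `i`-th request, where `q_i = serve i`
is its serving replica. -/
def triRho (R : List (ℕ × ℕ)) (serve : ℕ → ℕ × ℕ) (i : ℕ) : ℕ :=
  ((req R i).2 - (serve i).2) + natdist (serve i).1 (req R i).1

/-- `Base(i)`: the replicas `(v, t_i)` with `|v - v_i| ≤ ρ^T_i`. -/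
def triBase (n : ℕ) (R : List (ℕ × ℕ)) (serve : ℕ → ℕ × ℕ) (i : ℕ) : Finset (ℕ × ℕ) :=
  ((Finset.Icc 1 n).filter fun v => natdist v (req R i).1 ≤ triRho R serve i).image
    fun v => (v, (req R i).2)

/-- `Base_H(i)`: the horizontal edges joining consecutive replicas of `Base(i)`. -/
def triBaseH (n : ℕ) (R : List (ℕ × ℕ)) (serve : ℕ → ℕ × ℕ) (i : ℕ) : Finset GEdge :=
  ((Finset.Icc 1 n).filter fun v =>
      v + 1 ≤ n ∧ natdist v (req R i).1 ≤ triRho R serve i ∧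
        natdist (v + 1) (req R i).1 ≤ triRho R serve i).image
    fun v => GEdge.h v (req R i).2

/-- The arcs of the vertical path from the serving replica `(u_i, s_i)` to `(u_i, t_i)`
added at step (T3). -/
def triAddA (R : List (ℕ × ℕ)) (serve : ℕ → ℕ × ℕ) (i : ℕ) : Finset GEdge :=
  (Finset.Ico (serve i).2 (req R i).2).image fun τ => GEdge.a (serve i).1 τ

/-- Triangle's solution after handling the first `i` requests. -/
def triSol (R : List (ℕ × ℕ)) (serve : ℕ → ℕ × ℕ) (addH : ℕ → Finset GEdge)
    (i : ℕ) : Finset GEdge :=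
  (Finset.range i).biUnion fun j => triAddA R serve j ∪ addH j

/-- The replicas of Triangle's solution after handling the first `i` requests
(initially only the origin replica `(r0,0)`). -/
def triReps (r0 : ℕ) (R : List (ℕ × ℕ)) (serve : ℕ → ℕ × ℕ) (addH : ℕ → Finset GEdge)
    (i : ℕ) : Finset (ℕ × ℕ) :=
  insert (r0, 0) (verts (triSol R serve addH i))

/-- An execution of Algorithm Triangle on the instance `(n, r0, R)`:
`serve i` is the serving replica `q_i = (u_i, s_i)` of request `r_i` (step (T1)),
chosen in the current solution at minimum distance from `r_i`;
`addH i` is the set of horizontal edges added at step (T4), namely all of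
`Base_H(i)` except possibly one edge (the one closing a cycle). -/
structure TriangleExec (n r0 : ℕ) (R : List (ℕ × ℕ)) where
  serve : ℕ → ℕ × ℕ
  addH : ℕ → Finset GEdge
  serve_mem : ∀ i < R.length, serve i ∈ triReps r0 R serve addH i
  serve_time : ∀ i < R.length, (serve i).2 ≤ (req R i).2
  serve_min : ∀ i < R.length, ∀ q ∈ triReps r0 R serve addH i,
      gdist (serve i) (req R i) ≤ gdist q (req R i)
  addH_spec : ∀ i < R.length, ∃ E : Finset GEdge,
      E.card ≤ 1 ∧ addH i = triBaseH n R serve i \ E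
  base_conn : ∀ i < R.length, ∀ p ∈ triBase n R serve i,
      Reaches (triSol R serve addH (i + 1)) (r0, 0) p
  addH_tail : ∀ i, R.length ≤ i → addH i = ∅

/-- `H^T`: the horizontal edges of Triangle's final solution. -/
def triHT (R : List (ℕ × ℕ)) (addH : ℕ → Finset GEdge) : Finset GEdge :=
  (Finset.range R.length).biUnion addH

/-- `A^T`: the arcs of Triangle's final solution. -/
def triAT (R : List (ℕ × ℕ)) (serve : ℕ → ℕ × ℕ) : Finset GEdge :=
  (Finset.range R.length).biUnion (triAddA R serve)

/-- `Base = ∪ᵢ Base(i)`: all base replicas. -/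
def triBaseAll (n : ℕ) (R : List (ℕ × ℕ)) (serve : ℕ → ℕ × ℕ) : Finset (ℕ × ℕ) :=
  (Finset.range R.length).biUnion (triBase n R serve)

/-! ## Auxiliary lemmas for the proof -/

lemma gdist_coe (p q : ℕ × ℕ) (h : p.2 ≤ q.2) :
    gdist p q = ((q.2 - p.2 + natdist p.1 q.1 : ℕ) : WithTop ℕ) := if_pos h

lemma gdist_coe' (a b : ℕ) (q : ℕ × ℕ) (h : b ≤ q.2) :
    gdist (a, b) q = ((q.2 - b + natdist a q.1 : ℕ) : WithTop ℕ) := if_pos h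

lemma gdist_top (p q : ℕ × ℕ) (h : ¬ p.2 ≤ q.2) : gdist p q = ⊤ := if_neg h

lemma coe_le_coe_add_one {a b : ℕ} (hab : a ≤ b + 1) :
    (a : WithTop ℕ) ≤ (b : WithTop ℕ) + 1 := by
  rw [← Nat.cast_one, ← Nat.cast_add, Nat.cast_le]; exact hab

lemma wt_le_coe {x : WithTop ℕ} {b : ℕ} (h : x ≤ (b : WithTop ℕ)) :
    ∃ m : ℕ, x = (m : WithTop ℕ) ∧ m ≤ b := by
  induction x using WithTop.recTopCoe with
  | top => exact absurd h (by simp)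
  | coe m => exact ⟨m, by norm_cast, WithTop.coe_le_coe.mp h⟩

lemma gdist_le_step {F : Finset GEdge} {x y : ℕ × ℕ} (h : GStep F x y) (r : ℕ × ℕ) :
    gdist x r ≤ gdist y r + 1 := by
  cases h with
  | @right v t hF =>
      by_cases ht : t ≤ r.2
      · rw [gdist_coe' v t r ht, gdist_coe' (v + 1) t r ht]
        apply coe_le_coe_add_one
        simp only [natdist]; omega
      · rw [gdist_top (v + 1, t) r ht, top_add]; exact le_top
  | @left v t hF =>
      by_cases ht : t ≤ r.2
      · rw [gdist_coe' (v + 1) t r ht, gdist_coe' v t r ht]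
        apply coe_le_coe_add_one
        simp only [natdist]; omega
      · rw [gdist_top (v, t) r ht, top_add]; exact le_top
  | @up v t hF =>
      by_cases ht : t + 1 ≤ r.2
      · rw [gdist_coe' v t r (by omega), gdist_coe' v (t + 1) r ht]
        apply coe_le_coe_add_one
        omega
      · rw [gdist_top (v, t + 1) r ht, top_add]; exact le_top

lemma exists_cross {F : Finset GEdge} {r : ℕ × ℕ} (k : ℕ) :
    ∀ {p q : ℕ × ℕ}, Relation.ReflTransGen (GStep F) p q →
      gdist q r ≤ (k : WithTop ℕ) → ¬ gdist p r ≤ (k : WithTop ℕ) →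
      ∃ x y, GStep F x y ∧ gdist x r = ((k + 1 : ℕ) : WithTop ℕ) ∧
        gdist y r = (k : WithTop ℕ) := by
  intro p q hpq
  induction hpq using Relation.ReflTransGen.head_induction_on with
  | refl => intro hq hp; exact absurd hq hp
  | @head a c st rest ih =>
      intro hq hp
      by_cases hc : gdist c r ≤ (k : WithTop ℕ)
      · obtain ⟨m', hm', hm'k⟩ := wt_le_coe hc
        have h1 : gdist a r ≤ gdist c r + 1 := gdist_le_step st r
        rw [hm'] at h1
        have h1' : gdist a r ≤ ((m' + 1 : ℕ) : WithTop ℕ) :=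
          le_trans h1 (le_of_eq (Nat.cast_add_one m').symm)
        obtain ⟨m, hm, hmk⟩ := wt_le_coe h1'
        rw [hm] at hp
        have hmk' : ¬ m ≤ k := fun hh => hp (by exact_mod_cast hh)
        have hmek : m = k + 1 := by omega
        have hm'e : m' = k := by omega
        exact ⟨a, c, st, by rw [hm, hmek], by rw [hm', hm'e]⟩
      · exact ih hq hc

/-- The "level" of an edge relative to a request: the minimum distance of an
endpoint to the request. -/
def mval (r : ℕ × ℕ) : GEdge → ℕ
  | .h v t => min (r.2 - t + natdist v r.1) (r.2 - t + natdist (v + 1) r.1)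
  | .a v t => r.2 - (t + 1) + natdist v r.1

/-- The edge has an endpoint (its "head") at distance `< ρ` from `r`; for arcs
the head is the top endpoint. -/
def nearE (r : ℕ × ℕ) (ρ : ℕ) : GEdge → Prop
  | .h v t => t ≤ r.2 ∧ (r.2 - t + natdist v r.1 < ρ ∨ r.2 - t + natdist (v + 1) r.1 < ρ)
  | .a v t => t + 1 ≤ r.2 ∧ r.2 - (t + 1) + natdist v r.1 < ρ

instance (r : ℕ × ℕ) (ρ : ℕ) : DecidablePred (nearE r ρ) := fun e => by
  cases e <;> dsimp [nearE] <;> infer_instance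

lemma cross_edge {F : Finset GEdge} {r : ℕ × ℕ} {ρ k : ℕ} (hk : k < ρ) {x y : ℕ × ℕ}
    (st : GStep F x y)
    (hx : gdist x r = ((k + 1 : ℕ) : WithTop ℕ)) (hy : gdist y r = (k : WithTop ℕ)) :
    ∃ ed ∈ F, nearE r ρ ed ∧ mval r ed = k := by
  cases st with
  | @right v t hF =>
      have ht : t ≤ r.2 := by
        by_contra h
        rw [gdist_top (v + 1, t) r h] at hy
        exact (WithTop.top_ne_coe) hy
      rw [gdist_coe' v t r ht, Nat.cast_inj] at hx
      rw [gdist_coe' (v + 1) t r ht, Nat.cast_inj] at hy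
      exact ⟨_, hF, ⟨ht, Or.inr (by omega)⟩, by simp only [mval]; omega⟩
  | @left v t hF =>
      have ht : t ≤ r.2 := by
        by_contra h
        rw [gdist_top (v, t) r h] at hy
        exact (WithTop.top_ne_coe) hy
      rw [gdist_coe' (v + 1) t r ht, Nat.cast_inj] at hx
      rw [gdist_coe' v t r ht, Nat.cast_inj] at hy
      exact ⟨_, hF, ⟨ht, Or.inl (by omega)⟩, by simp only [mval]; omega⟩
  | @up v t hF =>
      have ht : t + 1 ≤ r.2 := by
        by_contra h
        rw [gdist_top (v, t + 1) r h] at hy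
        exact (WithTop.top_ne_coe) hy
      rw [gdist_coe' v (t + 1) r ht, Nat.cast_inj] at hy
      exact ⟨_, hF, ⟨ht, by omega⟩, by simp only [mval]; omega⟩

instance : Inhabited GEdge := ⟨GEdge.h 0 0⟩

lemma req_mem {R : List (ℕ × ℕ)} {i : ℕ} (hi : i < R.length) : req R i ∈ R := by
  rw [req, List.getD_eq_getElem R (0, 0) hi]
  exact List.getElem_mem hi

lemma rho_gdist_eq {n r0 : ℕ} {R : List (ℕ × ℕ)} (e : TriangleExec n r0 R) {i : ℕ}
    (hi : i < R.length) :
    gdist (e.serve i) (req R i) = ((triRho R e.serve i : ℕ) : WithTop ℕ) := by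
  rw [gdist_coe _ _ (e.serve_time i hi)]; rfl

lemma rho_le_gdist {n r0 : ℕ} {R : List (ℕ × ℕ)} (e : TriangleExec n r0 R) {i : ℕ}
    (hi : i < R.length) {q : ℕ × ℕ} (hq : q ∈ triReps r0 R e.serve e.addH i) :
    ((triRho R e.serve i : ℕ) : WithTop ℕ) ≤ gdist q (req R i) := by
  rw [← rho_gdist_eq e hi]
  exact e.serve_min i hi q hq

lemma rho_le_card_charge {n r0 : ℕ} {R : List (ℕ × ℕ)} (e : TriangleExec n r0 R)
    {F : Finset GEdge} (hF : Feasible n r0 R F) {i : ℕ} (hi : i < R.length) :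
    triRho R e.serve i ≤ (F.filter (nearE (req R i) (triRho R e.serve i))).card := by
  classical
  set ρ := triRho R e.serve i with hρ
  set r := req R i with hr
  have hreach : Relation.ReflTransGen (GStep F) (r0, 0) r := hF.2 r (req_mem hi)
  have horig : ((ρ : ℕ) : WithTop ℕ) ≤ gdist (r0, 0) r :=
    rho_le_gdist e hi (Finset.mem_insert_self _ _)
  have hex : ∀ k, k < ρ → ∃ ed, ed ∈ F.filter (nearE r ρ) ∧ mval r ed = k := by
    intro k hk
    have h0 : gdist r r ≤ (k : WithTop ℕ) := by
      rw [gdist_coe r r le_rfl, Nat.cast_le]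
      simp [natdist]
    have hp : ¬ gdist (r0, 0) r ≤ (k : WithTop ℕ) := by
      intro hle
      have : ((ρ : ℕ) : WithTop ℕ) ≤ (k : WithTop ℕ) := le_trans horig hle
      rw [Nat.cast_le] at this
      omega
    obtain ⟨x, y, st, hx, hy⟩ := exists_cross k hreach h0 hp
    obtain ⟨ed, hedF, hnear, hm⟩ := cross_edge hk st hx hy
    exact ⟨ed, Finset.mem_filter.mpr ⟨hedF, hnear⟩, hm⟩
  choose! f hf1 hf2 using hex
  have := Finset.card_le_card_of_injOn f
    (fun k hk => hf1 k (Finset.mem_range.mp hk))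
    (fun k hk k' hk' hEq => by
      rw [← hf2 k (Finset.mem_range.mp hk), ← hf2 k' (Finset.mem_range.mp hk'), hEq])
  simpa using this

lemma time_mono {n r0 : ℕ} {R : List (ℕ × ℕ)} (hV : ValidInstance n r0 R) {i j : ℕ}
    (hij : i ≤ j) (hj : j < R.length) : (req R i).2 ≤ (req R j).2 := by
  rcases eq_or_lt_of_le hij with rfl | h
  · exact le_rfl
  · have hp := (List.isChain_iff_pairwise).mp hV.2.2.2
    have hi : i < R.length := lt_trans h hj
    have := List.pairwise_iff_get.mp hp ⟨i, by simpa using hi⟩ ⟨j, by simpa using hj⟩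
      (by simpa using h)
    have hri : req R i = R[i] := List.getD_eq_getElem R (0, 0) hi
    have hrj : req R j = R[j] := List.getD_eq_getElem R (0, 0) hj
    rw [hri, hrj]
    simpa [List.get_eq_getElem, List.getElem_map] using this

lemma mem_base {n : ℕ} {R : List (ℕ × ℕ)} {serve : ℕ → ℕ × ℕ} {i w : ℕ}
    (hw1 : 1 ≤ w) (hw2 : w ≤ n) (hd : natdist w (req R i).1 ≤ triRho R serve i) :
    (w, (req R i).2) ∈ triBase n R serve i :=
  Finset.mem_image.mpr ⟨w, Finset.mem_filter.mpr ⟨Finset.mem_Icc.mpr ⟨hw1, hw2⟩, hd⟩, rfl⟩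

lemma triSol_mono (R : List (ℕ × ℕ)) (serve : ℕ → ℕ × ℕ) (addH : ℕ → Finset GEdge)
    {i j : ℕ} (hij : i ≤ j) : triSol R serve addH i ⊆ triSol R serve addH j :=
  Finset.biUnion_subset_biUnion_of_subset_left _ (Finset.range_subset_range.mpr hij)

lemma step_target_mem {F : Finset GEdge} {x y : ℕ × ℕ} (st : GStep F x y) :
    ∃ ed ∈ F, y ∈ eVerts ed := by
  cases st with
  | right hF => exact ⟨_, hF, by simp [eVerts]⟩
  | left hF => exact ⟨_, hF, by simp [eVerts]⟩
  | up hF => exact ⟨_, hF, by simp [eVerts]⟩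

lemma base_mem_reps {n r0 : ℕ} {R : List (ℕ × ℕ)} (e : TriangleExec n r0 R) {i j : ℕ}
    (hi : i < R.length) (hij : i < j) {p : ℕ × ℕ} (hp : p ∈ triBase n R e.serve i) :
    p ∈ triReps r0 R e.serve e.addH j := by
  have h := e.base_conn i hi p hp
  rcases Relation.ReflTransGen.cases_tail h with rfl | ⟨b, _, st⟩
  · exact Finset.mem_insert_self _ _
  · obtain ⟨ed, hed, hy⟩ := step_target_mem st
    refine Finset.mem_insert.mpr (Or.inr ?_)
    exact Finset.mem_biUnion.mpr ⟨ed, triSol_mono R e.serve e.addH hij hed, hy⟩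

lemma charge_disj {n r0 : ℕ} {R : List (ℕ × ℕ)} (hV : ValidInstance n r0 R)
    (e : TriangleExec n r0 R) {i j : ℕ} (hi : i < R.length) (hj : j < R.length)
    (hij : i < j) (ed : GEdge) (hg : eInGrid n ed)
    (h1 : nearE (req R i) (triRho R e.serve i) ed)
    (h2 : nearE (req R j) (triRho R e.serve j) ed) : False := by
  have tmono : (req R i).2 ≤ (req R j).2 := time_mono hV hij.le hj
  cases ed with
  | h v t =>
      obtain ⟨ht1, hd1⟩ := h1
      obtain ⟨ht2, hd2⟩ := h2
      obtain ⟨hv1, hv2⟩ := hg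
      -- pick the witness endpoint for request j
      obtain ⟨w, hw1, hwn, hwd2, hwdi⟩ :
          ∃ w, 1 ≤ w ∧ w ≤ n ∧ (req R j).2 - t + natdist w (req R j).1 < triRho R e.serve j ∧
            natdist w (req R i).1 ≤ triRho R e.serve i := by
        rcases hd2 with hd2 | hd2
        · exact ⟨v, by omega, by omega, hd2, by
            rcases hd1 with hd1 | hd1 <;> · simp only [natdist] at * ; omega⟩
        · exact ⟨v + 1, by omega, by omega, hd2, by
            rcases hd1 with hd1 | hd1 <;> · simp only [natdist] at * ; omega⟩
      have hbase : (w, (req R i).2) ∈ triBase n R e.serve i := mem_base hw1 hwn hwdi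
      have hreps := base_mem_reps e hi hij hbase
      have hm := rho_le_gdist e hj hreps
      rw [gdist_coe' w (req R i).2 (req R j) tmono, Nat.cast_le] at hm
      omega
  | a v t =>
      obtain ⟨ht1, hd1⟩ := h1
      obtain ⟨ht2, hd2⟩ := h2
      obtain ⟨hv1, hv2⟩ := hg
      have hwdi : natdist v (req R i).1 ≤ triRho R e.serve i := by omega
      have hbase : (v, (req R i).2) ∈ triBase n R e.serve i := mem_base hv1 hv2 hwdi
      have hreps := base_mem_reps e hi hij hbase
      have hm := rho_le_gdist e hj hreps
      rw [gdist_coe' v (req R i).2 (req R j) tmono, Nat.cast_le] at hm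
      omega

lemma sum_rho_le {n r0 : ℕ} {R : List (ℕ × ℕ)} (hV : ValidInstance n r0 R)
    (e : TriangleExec n r0 R) {F : Finset GEdge} (hF : Feasible n r0 R F) :
    ∑ i ∈ Finset.range R.length, triRho R e.serve i ≤ F.card := by
  classical
  have hdisj : ∀ i ∈ Finset.range R.length, ∀ j ∈ Finset.range R.length, i ≠ j →
      Disjoint (F.filter (nearE (req R i) (triRho R e.serve i)))
        (F.filter (nearE (req R j) (triRho R e.serve j))) := by
    intro i hi j hj hne
    rw [Finset.mem_range] at hi hj
    refine Finset.disjoint_left.mpr fun ed hdi hdj => ?_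
    rw [Finset.mem_filter] at hdi hdj
    have hg : eInGrid n ed := hF.1 ed hdi.1
    rcases lt_or_gt_of_ne hne with h | h
    · exact charge_disj hV e hi hj h ed hg hdi.2 hdj.2
    · exact charge_disj hV e hj hi h ed hg hdj.2 hdi.2
  calc ∑ i ∈ Finset.range R.length, triRho R e.serve i
      ≤ ∑ i ∈ Finset.range R.length,
          (F.filter (nearE (req R i) (triRho R e.serve i))).card :=
        Finset.sum_le_sum fun i hi => rho_le_card_charge e hF (Finset.mem_range.mp hi)
    _ = ((Finset.range R.length).biUnion fun i =>
          F.filter (nearE (req R i) (triRho R e.serve i))).card :=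
        (Finset.card_biUnion hdisj).symm
    _ ≤ F.card := Finset.card_le_card
        (Finset.biUnion_subset.mpr fun i _ => Finset.filter_subset _ _)

lemma gstep_mono {F F' : Finset GEdge} (hFF : F ⊆ F') {x y : ℕ × ℕ} (st : GStep F x y) :
    GStep F' x y := by
  cases st with
  | right hF => exact .right (hFF hF)
  | left hF => exact .left (hFF hF)
  | up hF => exact .up (hFF hF)

lemma vert_bounds {n : ℕ} {F : Finset GEdge} (hg : ∀ ed ∈ F, eInGrid n ed)
    {p : ℕ × ℕ} (hp : p ∈ verts F) : 1 ≤ p.1 ∧ p.1 ≤ n := by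
  obtain ⟨ed, hed, hv⟩ := Finset.mem_biUnion.mp hp
  have := hg ed hed
  cases ed with
  | h v t =>
      simp only [eVerts, Finset.mem_insert, Finset.mem_singleton] at hv
      obtain ⟨a1, a2⟩ := this
      rcases hv with rfl | rfl <;> simp <;> omega
  | a v t =>
      simp only [eVerts, Finset.mem_insert, Finset.mem_singleton] at hv
      obtain ⟨a1, a2⟩ := this
      rcases hv with rfl | rfl <;> simp <;> omega

lemma tri_grid {n r0 : ℕ} {R : List (ℕ × ℕ)} (hV : ValidInstance n r0 R)
    (e : TriangleExec n r0 R) :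
    ∀ i, i ≤ R.length → ∀ ed ∈ triSol R e.serve e.addH i, eInGrid n ed := by
  intro i
  induction i with
  | zero => intro _ ed hed; simp [triSol] at hed
  | succ i ih =>
      intro hi ed hed
      rw [triSol] at hed
      obtain ⟨j, hj, hm⟩ := Finset.mem_biUnion.mp hed
      have hj' : j < i + 1 := Finset.mem_range.mp hj
      have hjR : j < R.length := lt_of_lt_of_le hj' hi
      rcases Finset.mem_union.mp hm with hm | hm
      · obtain ⟨τ, hτ, rfl⟩ := Finset.mem_image.mp hm
        have hs := e.serve_mem j hjR
        have hb : 1 ≤ (e.serve j).1 ∧ (e.serve j).1 ≤ n := by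
          rcases Finset.mem_insert.mp hs with h | h
          · rw [h]; exact ⟨hV.1, hV.2.1⟩
          · refine vert_bounds ?_ h
            intro ed' hed'
            exact ih (le_of_lt (Nat.lt_of_succ_le hi))
              ed' (triSol_mono R e.serve e.addH (Nat.le_of_lt_succ hj') hed')
        exact hb
      · obtain ⟨E, _, hE⟩ := e.addH_spec j hjR
        rw [hE] at hm
        have hm' := (Finset.mem_sdiff.mp hm).1
        obtain ⟨v, hv, rfl⟩ := Finset.mem_image.mp hm'
        rw [Finset.mem_filter, Finset.mem_Icc] at hv
        exact ⟨hv.1.1, hv.2.1⟩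

lemma tri_feasible {n r0 : ℕ} {R : List (ℕ × ℕ)} (hV : ValidInstance n r0 R)
    (e : TriangleExec n r0 R) :
    Feasible n r0 R (triSol R e.serve e.addH R.length) := by
  constructor
  · exact tri_grid hV e R.length le_rfl
  · intro r hr
    obtain ⟨i, hi, rfl⟩ := List.mem_iff_getElem.mp hr
    have hreq : req R i = R[i] := List.getD_eq_getElem R (0, 0) hi
    have hv := hV.2.2.1 R[i] hr
    have hbase : (R[i].1, R[i].2) ∈ triBase n R e.serve i := by
      rw [← hreq] at hv ⊢
      exact mem_base hv.1 hv.2 (by simp [natdist])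
    have hR : Reaches (triSol R e.serve e.addH (i + 1)) (r0, 0) (R[i].1, R[i].2) :=
      e.base_conn i hi _ hbase
    have : Reaches (triSol R e.serve e.addH R.length) (r0, 0) (R[i].1, R[i].2) :=
      Relation.ReflTransGen.mono
        (fun _ _ st => gstep_mono (triSol_mono R e.serve e.addH hi) st) _ _ hR
    simpa using this

lemma card_baseH_le {n r0 : ℕ} {R : List (ℕ × ℕ)} (hV : ValidInstance n r0 R)
    (serve : ℕ → ℕ × ℕ) {i : ℕ} (hi : i < R.length) :
    (triBaseH n R serve i).card ≤ 2 * triRho R serve i := by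
  have hv1 : 1 ≤ (req R i).1 := (hV.2.2.1 _ (req_mem hi)).1
  refine le_trans Finset.card_image_le ?_
  refine le_trans (Finset.card_le_card (fun v hv => ?_ :
    ((Finset.Icc 1 n).filter fun v =>
        v + 1 ≤ n ∧ natdist v (req R i).1 ≤ triRho R serve i ∧
          natdist (v + 1) (req R i).1 ≤ triRho R serve i) ⊆
      Finset.Icc ((req R i).1 - triRho R serve i) ((req R i).1 + triRho R serve i - 1))) ?_
  · rw [Finset.mem_filter, Finset.mem_Icc] at hv
    rw [Finset.mem_Icc]
    obtain ⟨_, _, hd1, hd2⟩ := hv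
    simp only [natdist] at hd1 hd2
    omega
  · rw [Nat.card_Icc]
    omega

lemma card_le_three_sum {n r0 : ℕ} {R : List (ℕ × ℕ)} (hV : ValidInstance n r0 R)
    (e : TriangleExec n r0 R) :
    (triSol R e.serve e.addH R.length).card ≤
      3 * ∑ i ∈ Finset.range R.length, triRho R e.serve i := by
  calc (triSol R e.serve e.addH R.length).card
      ≤ ∑ i ∈ Finset.range R.length, (triAddA R e.serve i ∪ e.addH i).card :=
        Finset.card_biUnion_le
    _ ≤ ∑ i ∈ Finset.range R.length, 3 * triRho R e.serve i := by
        refine Finset.sum_le_sum fun i hi => ?_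
        have hiR : i < R.length := Finset.mem_range.mp hi
        have h1 : (triAddA R e.serve i).card ≤ triRho R e.serve i := by
          refine le_trans Finset.card_image_le ?_
          rw [Nat.card_Ico]
          unfold triRho
          omega
        have h2 : (e.addH i).card ≤ 2 * triRho R e.serve i := by
          obtain ⟨E, _, hE⟩ := e.addH_spec i hiR
          rw [hE]
          exact le_trans (Finset.card_le_card (Finset.sdiff_subset))
            (card_baseH_le hV e.serve hiR)
        calc (triAddA R e.serve i ∪ e.addH i).card
            ≤ (triAddA R e.serve i).card + (e.addH i).card := Finset.card_union_le _ _
          _ ≤ 3 * triRho R e.serve i := by omega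
    _ = 3 * ∑ i ∈ Finset.range R.length, triRho R e.serve i := (Finset.mul_sum _ _ _).symm

/-- For every MCD instance on the line network `L(n)` with origin
`r0` and request sequence `R`, Algorithm Triangle outputs a feasible solution
`F^T` with `|F^T| ≤ 3·|OPT|`, and its radii satisfy `Σᵢ ρ^T_i ≤ |OPT|`. -/
theorem triangle_three_approx (n r0 : ℕ) (R : List (ℕ × ℕ))
    (hV : ValidInstance n r0 R) (e : TriangleExec n r0 R) :
    Feasible n r0 R (triSol R e.serve e.addH R.length) ∧
      (triSol R e.serve e.addH R.length).card ≤ 3 * optCost n r0 R ∧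
      ∑ i ∈ Finset.range R.length, triRho R e.serve i ≤ optCost n r0 R := by
  have hfeas := tri_feasible hV e
  have hne : {c : ℕ | ∃ F : Finset GEdge, Feasible n r0 R F ∧ F.card = c}.Nonempty :=
    ⟨_, _, hfeas, rfl⟩
  obtain ⟨F, hFfeas, hFcard⟩ := Nat.sInf_mem hne
  have hsum : ∑ i ∈ Finset.range R.length, triRho R e.serve i ≤ optCost n r0 R := by
    rw [optCost, ← hFcard]
    exact sum_rho_le hV e hFfeas
  exact ⟨hfeas, le_trans (card_le_three_sum hV e) (by omega), hsum⟩
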